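/- ∫₀^{π/4} ∫₀^{π/4} (6/π³)·min{α, π−α, β, π−β} dα dβ = 1/32, while (∫₀^{π/4} 6x(π−x)/π³ dx)² = 25/1024, and 1/32 ≠ 25/1024. (That is, although two adjacent angles α, β of a uniform cyclic quadrilateral are uncorrelated, they are dependent: P(α ≤ π/4 and β ≤ π/4) ≠ P(α ≤ π/4)·P(β ≤ π/4).) -/

import Mathlib

/-! On `[0, π/2]²` the tent density is `(6/π³)·min α β`, and `min α β` integrates to `c³/3` over
`[0, c]²`; with `c = π/4` this gives `1/32`, while the marginal density integrates to `5/32`. -/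

open Real intervalIntegral

lemma integral_min_const_left {a b : ℝ} (ha : 0 ≤ a) (hab : a ≤ b) :
    ∫ β in (0:ℝ)..b, min a β = a * b - a ^ 2 / 2 := by
  have hmin : Continuous (min a) := continuous_const.min continuous_id
  have below : ∫ β in (0:ℝ)..a, min a β = ∫ β in (0:ℝ)..a, β :=
    integral_congr fun β hβ => min_eq_right (Set.uIcc_of_le ha ▸ hβ).2
  have above : ∫ β in a..b, min a β = ∫ _ in a..b, a :=
    integral_congr fun β hβ => min_eq_left (Set.uIcc_of_le hab ▸ hβ).1
  rw [← integral_add_adjacent_intervals (hmin.intervalIntegrable 0 a)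
    (hmin.intervalIntegrable a b), below, above, integral_id, integral_const, smul_eq_mul]
  ring

lemma integral_integral_min {c : ℝ} (hc : 0 ≤ c) :
    ∫ α in (0:ℝ)..c, ∫ β in (0:ℝ)..c, min α β = c ^ 3 / 3 := by
  rw [integral_congr fun α hα =>
    integral_min_const_left (Set.uIcc_of_le hc ▸ hα).1 (Set.uIcc_of_le hc ▸ hα).2]
  rw [integral_sub ((continuous_mul_const c).intervalIntegrable _ _)
    (((continuous_pow 2).div_const 2).intervalIntegrable _ _), integral_mul_const, integral_div,
    integral_id, integral_pow]
  ring

lemma integral_mul_sub (a c : ℝ) :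
    ∫ x in (0:ℝ)..c, x * (a - x) = a * c ^ 2 / 2 - c ^ 3 / 3 := by
  have : (fun x : ℝ => x * (a - x)) = fun x => a * x - x ^ 2 := by ext; ring
  rw [this, integral_sub ((continuous_const_mul a).intervalIntegrable _ _)
    ((continuous_pow 2).intervalIntegrable _ _), integral_const_mul, integral_id, integral_pow]
  ring

lemma min_min_sub_eq_min {a x y : ℝ} (hx : 2 * x ≤ a) (hy : 2 * y ≤ a) :
    min (min x (a - x)) (min y (a - y)) = min x y := by
  rw [min_eq_left (by linarith : x ≤ a - x), min_eq_left (by linarith : y ≤ a - y)]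

theorem adjacent_angles_dependent :
    (∫ α in (0:ℝ)..(π / 4), ∫ β in (0:ℝ)..(π / 4),
        (6 / π ^ 3) * min (min α (π - α)) (min β (π - β)) = 1 / 32) ∧
    ((∫ x in (0:ℝ)..(π / 4), 6 * x * (π - x) / π ^ 3) ^ 2 = 25 / 1024) ∧
    (1 / 32 : ℝ) ≠ 25 / 1024 := by
  have hπ := pi_pos
  have joint : ∫ α in (0:ℝ)..(π / 4), ∫ β in (0:ℝ)..(π / 4),
      min (min α (π - α)) (min β (π - β)) = (π / 4) ^ 3 / 3 := by
    rw [← integral_integral_min (by positivity)]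
    refine integral_congr fun α hα => integral_congr fun β hβ => ?_
    rw [Set.uIcc_of_le (by positivity)] at hα hβ
    exact min_min_sub_eq_min (by linarith [hα.2]) (by linarith [hβ.2])
  have marginal : ∫ x in (0:ℝ)..(π / 4), 6 * x * (π - x) / π ^ 3
      = 6 / π ^ 3 * (π * (π / 4) ^ 2 / 2 - (π / 4) ^ 3 / 3) := by
    rw [← integral_mul_sub, ← integral_const_mul]
    exact integral_congr fun x _ => by ring
  refine ⟨?_, ?_, by norm_num⟩
  · simp only [integral_const_mul, joint]
    field_simp
    ring
  · rw [marginal]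
    field_simp
    ring
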